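/- Let A be a sequence of pairs (a_k, w_k) with w_k > 0. For each i, A(i, p[i]) is the first block of the decreasingly right-skew partition of A(i, n) if and only if A(i, p[i]) is the longest right-skew segment starting at index i. -/

import Mathlib

noncomputable def density (a w : ℕ → ℝ) (i j : ℕ) : ℝ :=
  (∑ t ∈ Finset.Icc i j, a t) / (∑ t ∈ Finset.Icc i j, w t)

def RightSkew (a w : ℕ → ℝ) (i k : ℕ) : Prop :=
  ∀ j, i ≤ j → j < k → density a w i j ≤ density a w (j + 1) k

def IsDRSP (a w : ℕ → ℝ) (x y : ℕ) (segs : List (ℕ × ℕ)) : Prop :=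
  segs ≠ [] ∧
  segs.head?.map Prod.fst = some x ∧
  segs.getLast?.map Prod.snd = some y ∧
  (∀ s ∈ segs, s.1 ≤ s.2 ∧ RightSkew a w s.1 s.2) ∧
  segs.Chain' (fun s t => t.1 = s.2 + 1 ∧ density a w t.1 t.2 < density a w s.1 s.2)

/-!
Densities of adjacent segments combine as a mediant, so the density of a concatenation lies
between the densities of its two parts. Hence every prefix of a right-skew segment is at most
as dense as the segment, and two right-skew segments with increasing densities glue to a
right-skew segment.

If the partition starts with `A(i, p)`, every segment `A(p + 1, k)` inside the rest of the
partition is a concatenation of pieces of blocks less dense than `A(i, p)`, so it is less dense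
too; a right-skew `A(i, k)` with `k > p` would need the opposite. Conversely, by the gluing
property the longest right-skew segment starting at `p + 1` is strictly less dense than the
longest one `A(i, p)` starting at `i`, so taking longest right-skew segments greedily builds
the partition.
-/

theorem Finset.sum_Icc_add_sum_Icc_succ {M : Type*} [AddCommMonoid M] (f : ℕ → M) {i j k : ℕ}
    (hij : i ≤ j + 1) (hjk : j ≤ k) :
    (∑ t ∈ Icc i j, f t) + ∑ t ∈ Icc (j + 1) k, f t = ∑ t ∈ Icc i k, f t := by
  simp only [← Ico_add_one_right_eq_Icc]
  exact sum_Ico_consecutive f hij (by omega)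

section Mediant

variable {α : Type*} [Field α] [LinearOrder α] [IsStrictOrderedRing α] {x₁ x₂ w₁ w₂ c : α}

theorem add_div_add_le (hw₁ : 0 < w₁) (hw₂ : 0 < w₂) (h₁ : x₁ / w₁ ≤ c) (h₂ : x₂ / w₂ ≤ c) :
    (x₁ + x₂) / (w₁ + w₂) ≤ c := by
  rw [div_le_iff₀ hw₁] at h₁
  rw [div_le_iff₀ hw₂] at h₂
  rw [div_le_iff₀ (add_pos hw₁ hw₂)]
  linarith

theorem add_div_add_lt (hw₁ : 0 < w₁) (hw₂ : 0 < w₂) (h₁ : x₁ / w₁ < c) (h₂ : x₂ / w₂ < c) :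
    (x₁ + x₂) / (w₁ + w₂) < c := by
  rw [div_lt_iff₀ hw₁] at h₁
  rw [div_lt_iff₀ hw₂] at h₂
  rw [div_lt_iff₀ (add_pos hw₁ hw₂)]
  linarith

theorem le_add_div_add (hw₁ : 0 < w₁) (hw₂ : 0 < w₂) (h₁ : c ≤ x₁ / w₁) (h₂ : c ≤ x₂ / w₂) :
    c ≤ (x₁ + x₂) / (w₁ + w₂) := by
  rw [le_div_iff₀ hw₁] at h₁
  rw [le_div_iff₀ hw₂] at h₂
  rw [le_div_iff₀ (add_pos hw₁ hw₂)]
  linarith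

end Mediant

section Density

variable {a w : ℕ → ℝ} {i j k : ℕ} {c : ℝ}

theorem sum_Icc_weight_pos (hw : ∀ t, 0 < w t) (hij : i ≤ j) : 0 < ∑ t ∈ Finset.Icc i j, w t :=
  Finset.sum_pos (fun t _ => hw t) (Finset.nonempty_Icc.2 hij)

theorem density_eq_add_div_add (hij : i ≤ j) (hjk : j < k) :
    density a w i k = ((∑ t ∈ Finset.Icc i j, a t) + ∑ t ∈ Finset.Icc (j + 1) k, a t) /
      ((∑ t ∈ Finset.Icc i j, w t) + ∑ t ∈ Finset.Icc (j + 1) k, w t) := by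
  rw [density, Finset.sum_Icc_add_sum_Icc_succ a (by omega) hjk.le,
    Finset.sum_Icc_add_sum_Icc_succ w (by omega) hjk.le]

theorem density_le_of_split (hw : ∀ t, 0 < w t) (hij : i ≤ j) (hjk : j < k)
    (h₁ : density a w i j ≤ c) (h₂ : density a w (j + 1) k ≤ c) : density a w i k ≤ c := by
  rw [density_eq_add_div_add hij hjk]
  exact add_div_add_le (sum_Icc_weight_pos hw hij) (sum_Icc_weight_pos hw hjk) h₁ h₂

theorem density_lt_of_split (hw : ∀ t, 0 < w t) (hij : i ≤ j) (hjk : j < k)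
    (h₁ : density a w i j < c) (h₂ : density a w (j + 1) k < c) : density a w i k < c := by
  rw [density_eq_add_div_add hij hjk]
  exact add_div_add_lt (sum_Icc_weight_pos hw hij) (sum_Icc_weight_pos hw hjk) h₁ h₂

theorem le_density_of_split (hw : ∀ t, 0 < w t) (hij : i ≤ j) (hjk : j < k)
    (h₁ : c ≤ density a w i j) (h₂ : c ≤ density a w (j + 1) k) : c ≤ density a w i k := by
  rw [density_eq_add_div_add hij hjk]
  exact le_add_div_add (sum_Icc_weight_pos hw hij) (sum_Icc_weight_pos hw hjk) h₁ h₂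

end Density

section RightSkew

variable {a w : ℕ → ℝ} {i j k : ℕ}

theorem rightSkew_self (a w : ℕ → ℝ) (i : ℕ) : RightSkew a w i i :=
  fun _ hij hji => absurd (hij.trans_lt hji) (lt_irrefl i)

theorem RightSkew.density_le (hw : ∀ t, 0 < w t) (h : RightSkew a w i k) (hij : i ≤ j)
    (hjk : j ≤ k) : density a w i j ≤ density a w i k := by
  rcases hjk.eq_or_lt with rfl | hjk
  · exact le_rfl
  · exact le_density_of_split hw hij hjk le_rfl (h j hij hjk)

theorem RightSkew.append (hw : ∀ t, 0 < w t) (hij : i ≤ j) (hjk : j < k)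
    (h₁ : RightSkew a w i j) (h₂ : RightSkew a w (j + 1) k)
    (hd : density a w i j ≤ density a w (j + 1) k) : RightSkew a w i k := by
  intro m him hmk
  rcases lt_trichotomy m j with hmj | rfl | hjm
  · have hm := h₁ m him hmj
    exact le_density_of_split hw (by omega) hjk hm ((h₁.density_le hw him hmj.le).trans hd)
  · exact hd
  · have hm := h₂ m (by omega) hmk
    have hd' := density_le_of_split hw (by omega) hmk hm le_rfl
    exact density_le_of_split hw hij hjm (hd.trans hd') hm

end RightSkew

def IsLongestRightSkew (a w : ℕ → ℝ) (n i p : ℕ) : Prop :=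
  i ≤ p ∧ p ≤ n ∧ RightSkew a w i p ∧ ∀ k, i ≤ k → k ≤ n → RightSkew a w i k → k ≤ p

theorem exists_isLongestRightSkew (a w : ℕ → ℝ) {n i : ℕ} (hin : i ≤ n) :
    ∃ p, IsLongestRightSkew a w n i p := by
  classical
  set ends := (Finset.Icc i n).filter (RightSkew a w i)
  have hi : i ∈ ends := Finset.mem_filter.2 ⟨Finset.mem_Icc.2 ⟨le_rfl, hin⟩, rightSkew_self a w i⟩
  obtain ⟨hp, hrs⟩ := Finset.mem_filter.1 (ends.max'_mem ⟨i, hi⟩)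
  exact ⟨ends.max' ⟨i, hi⟩, (Finset.mem_Icc.1 hp).1, (Finset.mem_Icc.1 hp).2, hrs,
    fun k hik hkn hk => ends.le_max' k (Finset.mem_filter.2 ⟨Finset.mem_Icc.2 ⟨hik, hkn⟩, hk⟩)⟩

section IsDRSP

variable {a w : ℕ → ℝ} {x y p q : ℕ} {rest : List (ℕ × ℕ)}

theorem isDRSP_singleton_iff : IsDRSP a w x y [(x, p)] ↔ p = y ∧ x ≤ p ∧ RightSkew a w x p := by
  simp [IsDRSP, List.Chain']

theorem isDRSP_cons_cons_iff {x' : ℕ} :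
    IsDRSP a w x y ((x, p) :: (x', q) :: rest) ↔
      x ≤ p ∧ RightSkew a w x p ∧ x' = p + 1 ∧ density a w x' q < density a w x p ∧
        IsDRSP a w x' y ((x', q) :: rest) := by
  simp [IsDRSP, List.Chain', List.isChain_cons_cons]
  tauto

theorem IsDRSP.head_le {x' : ℕ} (h : IsDRSP a w x y ((x', p) :: rest)) : x' ≤ p :=
  (h.2.2.2.1 _ List.mem_cons_self).1

theorem IsDRSP.head_rightSkew {x' : ℕ} (h : IsDRSP a w x y ((x', p) :: rest)) :
    RightSkew a w x' p :=
  (h.2.2.2.1 _ List.mem_cons_self).2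

theorem IsDRSP.head_snd_le (h : IsDRSP a w x y ((x, p) :: rest)) : p ≤ y := by
  induction rest generalizing x p with
  | nil => exact (isDRSP_singleton_iff.1 h).1.le
  | cons t rest ih =>
    obtain ⟨x', q⟩ := t
    obtain ⟨-, -, rfl, -, htail⟩ := isDRSP_cons_cons_iff.1 h
    have hpq := htail.head_le
    have hqy := ih htail
    omega

theorem IsDRSP.density_lt (hw : ∀ t, 0 < w t) (h : IsDRSP a w x y ((x, p) :: rest)) {c : ℝ}
    {k : ℕ} (hc : density a w x p < c) (hxk : x ≤ k) (hky : k ≤ y) : density a w x k < c := by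
  induction rest generalizing x p with
  | nil =>
    obtain ⟨rfl, -, hrs⟩ := isDRSP_singleton_iff.1 h
    exact (hrs.density_le hw hxk hky).trans_lt hc
  | cons t rest ih =>
    obtain ⟨x', q⟩ := t
    obtain ⟨hxp, hrs, rfl, hlt, htail⟩ := isDRSP_cons_cons_iff.1 h
    rcases le_or_gt k p with hkp | hpk
    · exact (hrs.density_le hw hxk hkp).trans_lt hc
    · exact density_lt_of_split hw hxp hpk hc (ih htail (hlt.trans hc) hpk)

theorem IsDRSP.isLongestRightSkew (hw : ∀ t, 0 < w t) (h : IsDRSP a w x y ((x, p) :: rest)) :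
    IsLongestRightSkew a w y x p := by
  refine ⟨h.head_le, h.head_snd_le, h.head_rightSkew, fun k hxk hky hk => ?_⟩
  by_contra! hpk
  rcases rest with _ | ⟨⟨x', q⟩, rest⟩
  · have := (isDRSP_singleton_iff.1 h).1
    omega
  · obtain ⟨hxp, -, rfl, hlt, htail⟩ := isDRSP_cons_cons_iff.1 h
    exact lt_irrefl _ ((hk p hxp hpk).trans_lt (htail.density_lt hw hlt hpk hky))

end IsDRSP

section IsLongestRightSkew

variable {a w : ℕ → ℝ}

theorem IsLongestRightSkew.density_next_lt (hw : ∀ t, 0 < w t) {n i p q : ℕ}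
    (hp : IsLongestRightSkew a w n i p) (hq : IsLongestRightSkew a w n (p + 1) q) :
    density a w (p + 1) q < density a w i p := by
  obtain ⟨hip, -, hrs, hmax⟩ := hp
  obtain ⟨hpq, hqn, hrs', -⟩ := hq
  by_contra! hle
  have := hmax q (by omega) hqn (hrs.append hw hip hpq hrs' hle)
  omega

theorem IsLongestRightSkew.exists_isDRSP (hw : ∀ t, 0 < w t) {n i p : ℕ}
    (h : IsLongestRightSkew a w n i p) : ∃ rest, IsDRSP a w i n ((i, p) :: rest) := by
  obtain ⟨hip, hpn, hrs, -⟩ := id h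
  rcases hpn.eq_or_lt with rfl | hpn
  · exact ⟨[], isDRSP_singleton_iff.2 ⟨rfl, hip, hrs⟩⟩
  obtain ⟨q, hq⟩ := exists_isLongestRightSkew a w hpn
  obtain ⟨rest, hrest⟩ := hq.exists_isDRSP hw
  exact ⟨_, isDRSP_cons_cons_iff.2 ⟨hip, hrs, rfl, h.density_next_lt hw hq, hrest⟩⟩
termination_by n - i
decreasing_by omega

end IsLongestRightSkew

theorem first_block_iff_longest_rightSkew_general (a w : ℕ → ℝ) (hw : ∀ t, 0 < w t)
    (n i : ℕ) (pi : ℕ) :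
    (∃ segs : List (ℕ × ℕ), IsDRSP a w i n segs ∧ segs.head? = some (i, pi)) ↔
    (i ≤ pi ∧ pi ≤ n ∧ RightSkew a w i pi ∧
      ∀ k', i ≤ k' → k' ≤ n → RightSkew a w i k' → k' ≤ pi) := by
  constructor
  · rintro ⟨segs, hsegs, hhead⟩
    obtain ⟨rest, rfl⟩ := List.head?_eq_some_iff.1 hhead
    exact hsegs.isLongestRightSkew hw
  · intro h
    obtain ⟨rest, hrest⟩ := IsLongestRightSkew.exists_isDRSP hw h
    exact ⟨_, hrest, rfl⟩

theorem first_block_iff_longest_rightSkew (a w : ℕ → ℝ) (hw : ∀ t, 0 < w t)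
    (n i : ℕ) (hi : 1 ≤ i) (hin : i ≤ n) (pi : ℕ) :
    (∃ segs : List (ℕ × ℕ), IsDRSP a w i n segs ∧ segs.head? = some (i, pi)) ↔
    (i ≤ pi ∧ pi ≤ n ∧ RightSkew a w i pi ∧
      ∀ k', i ≤ k' → k' ≤ n → RightSkew a w i k' → k' ≤ pi) :=
  first_block_iff_longest_rightSkew_general a w hw n i pi
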